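/- If M →h N under weak call-by-name reduction, t is a canonical closed Ψ-term and ⟦t⟧_w = M, then t rewrites in one step in Ψ to a term u with ⟦u⟧_w = N and #app(u) + 1 ≥ #app(t), where #app(·) counts occurrences of the function symbol app. -/

import Mathlib

/-- Untyped λ-terms over variables drawn from ℕ (a denumerable totally ordered set). -/
inductive Lam : Type
  | var : ℕ → Lam
  | lam : ℕ → Lam → Lam
  | app : Lam → Lam → Lam
deriving DecidableEq, Repr

namespace Lam

/-- Capture-permitting substitution M{N/x} (adequate for weak reduction of closed terms). -/
def subst : Lam → ℕ → Lam → Lam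
  | var y, x, N => if y = x then N else var y
  | lam y M, x, N => if y = x then lam y M else lam y (subst M x N)
  | app M₁ M₂, x, N => app (subst M₁ x N) (subst M₂ x N)

/-- Simultaneous substitution along a partial assignment of terms to variables. -/
def msubst : Lam → (ℕ → Option Lam) → Lam
  | var y, σ => (σ y).getD (var y)
  | lam y M, σ => lam y (msubst M (fun z => if z = y then none else σ z))
  | app M₁ M₂, σ => app (msubst M₁ σ) (msubst M₂ σ)

/-- The assignment sending each `xᵢ` to `tᵢ` (first match wins). -/
def substOf (xs : List ℕ) (ts : List Lam) : ℕ → Option Lam :=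
  fun y => (xs.zip ts).lookup y

/-- Values: variables and abstractions. -/
def IsValue : Lam → Prop
  | var _ => True
  | lam _ _ => True
  | app _ _ => False

/-- Weak call-by-value reduction. -/
inductive CbvStep : Lam → Lam → Prop
  | beta {x : ℕ} {M V : Lam} : IsValue V → CbvStep (app (lam x M) V) (subst M x V)
  | appL {M N L : Lam} : CbvStep M N → CbvStep (app M L) (app N L)
  | appR {M N L : Lam} : CbvStep M N → CbvStep (app L M) (app L N)

/-- A →v-normal form. -/
def CbvNormal (M : Lam) : Prop := ¬ ∃ N, CbvStep M N

/-- Free variables, as a finite set. -/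
def fv : Lam → Finset ℕ
  | var x => {x}
  | lam x M => fv M \ {x}
  | app M N => fv M ∪ fv N

/-- The sequence (without repetitions, in variable order) of free variables of `M`. -/
def fvList (M : Lam) : List ℕ := (fv M).sort (· ≤ ·)

def Closed (M : Lam) : Prop := fv M = ∅

/-- The size |M| of a λ-term. -/
def size : Lam → ℕ
  | var _ => 1
  | lam _ M => size M + 1
  | app M N => size M + size N + 1

end Lam

/-- `NSteps r n a b`: `a` reduces to `b` in exactly `n` `r`-steps. -/
def NSteps {α : Type*} (r : α → α → Prop) : ℕ → α → α → Prop
  | 0 => fun a b => a = b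
  | n + 1 => fun a c => ∃ b, r a b ∧ NSteps r n b c

/-- Weak call-by-name reduction →h. -/
inductive CbnStep : Lam → Lam → Prop
  | beta {x : ℕ} {M N : Lam} : CbnStep (Lam.app (Lam.lam x M) N) (Lam.subst M x N)
  | appL {M M' L : Lam} : CbnStep M M' → CbnStep (Lam.app M L) (Lam.app M' L)

/-- Terms of the constructor rewrite system Ψ: variables, the binary function
symbol `app`, the binary constructor `capp`, and for every λ-term `M` and variable
`x` a constructor `c_{x,M}` (here `con x M`) of arity the length of FV(λx.M). -/
inductive QTerm : Type
  | var : ℕ → QTerm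
  | app : QTerm → QTerm → QTerm
  | capp : QTerm → QTerm → QTerm
  | con : ℕ → Lam → List QTerm → QTerm

namespace QTerm

/-- Well-formed Ψ-terms: arities are respected. -/
inductive WFQ : QTerm → Prop
  | var {x} : WFQ (var x)
  | app {u v} : WFQ u → WFQ v → WFQ (app u v)
  | capp {u v} : WFQ u → WFQ v → WFQ (capp u v)
  | con {x M ts} : ts.length = (Lam.fvList (Lam.lam x M)).length →
      (∀ t ∈ ts, WFQ t) → WFQ (con x M ts)

/-- Constructor terms of Ψ: built only from `capp` and the `c_{x,M}`. -/
inductive IsConTermQ : QTerm → Prop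
  | capp {u v} : IsConTermQ u → IsConTermQ v → IsConTermQ (capp u v)
  | con {x M ts} : (∀ t ∈ ts, IsConTermQ t) → IsConTermQ (con x M ts)

/-- Closed Ψ-terms: no variables. -/
inductive ClosedQ : QTerm → Prop
  | app {u v} : ClosedQ u → ClosedQ v → ClosedQ (app u v)
  | capp {u v} : ClosedQ u → ClosedQ v → ClosedQ (capp u v)
  | con {x M ts} : (∀ t ∈ ts, ClosedQ t) → ClosedQ (con x M ts)

/-- Canonical closed Ψ-terms: either a constructor term of the form
c_{x,M}(t₁,…,tₙ), or app(u,v) with u canonical and v a constructor term. -/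
inductive CanonicalQ : QTerm → Prop
  | con {x M ts} : (∀ t ∈ ts, IsConTermQ t) → CanonicalQ (con x M ts)
  | app {u v} : CanonicalQ u → IsConTermQ v → CanonicalQ (app u v)

/-- Substitution of Ψ-terms for variables. -/
def qsubst (σ : ℕ → Option QTerm) : QTerm → QTerm
  | var y => (σ y).getD (var y)
  | app u v => app (qsubst σ u) (qsubst σ v)
  | capp u v => capp (qsubst σ u) (qsubst σ v)
  | con x M ts => con x M (ts.attach.map (fun t => qsubst σ t.1))
decreasing_by
  all_goals simp_wf
  all_goals try have := List.sizeOf_lt_of_mem t.2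
  all_goals omega

/-- The assignment sending each `xᵢ` to `tᵢ`. -/
def substOfQ (xs : List ℕ) (ts : List QTerm) : ℕ → Option QTerm :=
  fun y => (xs.zip ts).lookup y

/-- The number of occurrences of the function symbol `app` in a Ψ-term. -/
def countApp : QTerm → ℕ
  | var _ => 0
  | app u v => countApp u + countApp v + 1
  | capp u v => countApp u + countApp v
  | con _ _ ts => (ts.attach.map (fun t => countApp t.1)).sum
decreasing_by
  all_goals simp_wf
  all_goals try have := List.sizeOf_lt_of_mem t.2
  all_goals omega

end QTerm

/-- The auxiliary translation ⟨·⟩'_w from λ-terms to Ψ-constructor terms. -/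
def transW' : Lam → QTerm
  | .var x => .var x
  | .lam x M => .con x M ((Lam.fvList (.lam x M)).map .var)
  | .app M N => .capp (transW' M) (transW' N)

/-- The translation ⟨·⟩_w from λ-terms to Ψ-terms. -/
def transW : Lam → QTerm
  | .var x => .var x
  | .lam x M => .con x M ((Lam.fvList (.lam x M)).map .var)
  | .app M N => .app (transW M) (transW' N)

/-- The readback ⟦·⟧_w from Ψ-terms to λ-terms. -/
def readbackW : QTerm → Lam
  | .var x => .var x
  | .app u v => .app (readbackW u) (readbackW v)
  | .capp u v => .app (readbackW u) (readbackW v)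
  | .con x M ts =>
      Lam.msubst (.lam x M)
        (Lam.substOf (Lam.fvList (.lam x M)) (ts.attach.map (fun t => readbackW t.1)))
decreasing_by
  all_goals simp_wf
  all_goals try have := List.sizeOf_lt_of_mem t.2
  all_goals omega

/-- One-step rewriting in Ψ: the five families of ordinary rules and the
administrative rule, with matched variables instantiated by constructor terms,
closed under arbitrary contexts. -/
inductive PsiStep : QTerm → QTerm → Prop
  | id_capp {z : ℕ} {w f : QTerm} :
      QTerm.IsConTermQ w → QTerm.IsConTermQ f →
      PsiStep (.app (.con z (.var z) []) (.capp w f)) (.app w f)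
  | id_con {z x : ℕ} {M : Lam} {ts : List QTerm} :
      (∀ t ∈ ts, QTerm.IsConTermQ t) →
      ts.length = (Lam.fvList (.lam x M)).length →
      PsiStep (.app (.con z (.var z) []) (.con x M ts)) (.con x M ts)
  | proj_capp {z w : ℕ} {f g h : QTerm} :
      w ≠ z → QTerm.IsConTermQ f → QTerm.IsConTermQ g → QTerm.IsConTermQ h →
      PsiStep (.app (.con z (.var w) [.capp f g]) h) (.app f g)
  | proj_con {z w x : ℕ} {M : Lam} {ts : List QTerm} {h : QTerm} :
      w ≠ z → (∀ t ∈ ts, QTerm.IsConTermQ t) →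
      ts.length = (Lam.fvList (.lam x M)).length →
      QTerm.IsConTermQ h →
      PsiStep (.app (.con z (.var w) [.con x M ts]) h) (.con x M ts)
  | beta {y : ℕ} {N : Lam} {ts : List QTerm} {v : QTerm} :
      (∀ z : ℕ, N ≠ .var z) →
      (∀ t ∈ ts, QTerm.IsConTermQ t) → QTerm.IsConTermQ v →
      ts.length = (Lam.fvList (.lam y N)).length →
      PsiStep (.app (.con y N ts) v)
        (QTerm.qsubst (QTerm.substOfQ (Lam.fvList (.lam y N) ++ [y]) (ts ++ [v]))
          (transW N))
  | adm {a b c : QTerm} :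
      QTerm.IsConTermQ a → QTerm.IsConTermQ b → QTerm.IsConTermQ c →
      PsiStep (.app (.capp a b) c) (.app (.app a b) c)
  | appL {u u' v} : PsiStep u u' → PsiStep (.app u v) (.app u' v)
  | appR {u v v'} : PsiStep v v' → PsiStep (.app u v) (.app u v')
  | cappL {u u' v} : PsiStep u u' → PsiStep (.capp u v) (.capp u' v)
  | cappR {u v v'} : PsiStep v v' → PsiStep (.capp u v) (.capp u v')
  | conArg {x M ts₁ t t' ts₂} : PsiStep t t' →
      PsiStep (.con x M (ts₁ ++ t :: ts₂)) (.con x M (ts₁ ++ t' :: ts₂))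

/-!
Ψ-terms are read back compositionally, and the readback of an instantiated translation is a
substitution instance: `⟦⟨P⟩_w τ⟧_w = P{⟦τ⟧_w}`. A canonical term is a spine
`app(… app(c_{y,P}(ts), v₁) …, vₙ)` of constructor terms, whose readback has its head redex
at the bottom of the spine, `⟦c_{y,P}(ts)⟧_w ⟦v₁⟧_w`. There a rule of Ψ applies: the
identity rules when `P = y`, the projection rules when `P` is another variable, and the
β-rule otherwise, whose right-hand side reads back to the contractum since the closed
arguments `ts` are not captured. The redex `app(c_{y,P}(ts), v₁)` carries the only `app`
that may disappear.
-/

namespace Lam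

lemma subst_eq_self_of_notMem_fv {M : Lam} {y : ℕ} (h : y ∉ fv M) (V : Lam) :
    subst M y V = M := by
  induction M with
  | var z => simp_all [fv, subst, eq_comm]
  | lam z M ih =>
    by_cases hzy : z = y
    · simp [subst, hzy]
    · simp only [fv, Finset.mem_sdiff, Finset.mem_singleton, not_and, not_not] at h
      simp [subst, hzy, ih fun hm => hzy (h hm).symm]
  | app M₁ M₂ ih₁ ih₂ => simp_all [fv, subst]

lemma msubst_congr : ∀ {M : Lam} {σ σ' : ℕ → Option Lam},
    (∀ z ∈ fv M, (σ z).getD (var z) = (σ' z).getD (var z)) → msubst M σ = msubst M σ'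
  | var z, σ, σ', h => by simpa [msubst, fv] using h z (by simp [fv])
  | lam y M, σ, σ', h => by
    rw [msubst, msubst, msubst_congr fun z hz => ?_]
    by_cases hzy : z = y
    · simp [hzy]
    · simpa [hzy] using h z (by simp [fv, hz, hzy])
  | app M₁ M₂, σ, σ', h => by
    rw [msubst, msubst, msubst_congr fun z hz => h z (by simp [fv, hz]),
      msubst_congr fun z hz => h z (by simp [fv, hz])]

lemma exists_mem_fv_of_mem_fv_msubst : ∀ {M : Lam} {σ : ℕ → Option Lam} {w : ℕ},
    w ∈ fv (msubst M σ) → ∃ z ∈ fv M, w ∈ fv ((σ z).getD (var z))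
  | var z, σ, w, h => ⟨z, by simp [fv], by simpa [msubst] using h⟩
  | lam y M, σ, w, h => by
    simp only [msubst, fv, Finset.mem_sdiff, Finset.mem_singleton] at h
    obtain ⟨z, hz, hw⟩ := exists_mem_fv_of_mem_fv_msubst h.1
    by_cases hzy : z = y
    · simp [hzy, fv, h.2] at hw
    · exact ⟨z, by simp [fv, hz, hzy], by simpa [hzy] using hw⟩
  | app M₁ M₂, σ, w, h => by
    simp only [msubst, fv, Finset.mem_union] at h
    rcases h with h | h <;> obtain ⟨z, hz, hw⟩ := exists_mem_fv_of_mem_fv_msubst h <;>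
      exact ⟨z, by simp [fv, hz], hw⟩

lemma subst_msubst : ∀ {M : Lam} {σ : ℕ → Option Lam} {y : ℕ} {V : Lam},
    (∀ z t, σ z = some t → fv t = ∅) → σ y = none →
    subst (msubst M σ) y V = msubst M (fun z => if z = y then some V else σ z)
  | var z, σ, y, V, hcl, hy => by
    rcases hσ : σ z with _ | t
    · by_cases hzy : z = y <;> simp_all [msubst, subst]
    · have hzy : z ≠ y := by rintro rfl; simp_all
      have ht := subst_eq_self_of_notMem_fv (M := t) (y := y) (by simp [hcl z t hσ]) V
      simp [msubst, hσ, hzy, ht]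
  | lam w M, σ, y, V, hcl, hy => by
    by_cases hwy : w = y
    · subst hwy
      simp only [msubst, subst, if_true, lam.injEq, true_and]
      refine msubst_congr fun z hz => ?_
      by_cases hzw : z = w <;> simp [hzw]
    · have hcl' : ∀ z t, (if z = w then none else σ z) = some t → fv t = ∅ := by
        intro z t h
        by_cases hzw : z = w
        · simp [hzw] at h
        · exact hcl z t (by simpa [hzw] using h)
      simp only [msubst, subst, if_neg hwy, lam.injEq, true_and]
      rw [subst_msubst hcl' (by simp [hy])]
      refine msubst_congr fun z hz => ?_
      by_cases hzy : z = y <;> by_cases hzw : z = w <;> simp_all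
  | app M₁ M₂, σ, y, V, hcl, hy => by
    simp [msubst, subst, subst_msubst hcl hy]

lemma mem_fvList {M : Lam} {z : ℕ} : z ∈ fvList M ↔ z ∈ fv M := Finset.mem_sort _

lemma notMem_fvList_lam_self (y : ℕ) (P : Lam) : y ∉ fvList (lam y P) := by
  simp [mem_fvList, fv]

lemma fvList_lam_var_self (z : ℕ) : fvList (lam z (var z)) = [] := by
  simp [fvList, fv]

lemma fvList_lam_var_of_ne {y z : ℕ} (h : z ≠ y) : fvList (lam y (var z)) = [z] := by
  rw [fvList, show fv (lam y (var z)) = {z} by simp [fv, h]]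
  exact Finset.sort_singleton _ z

end Lam

namespace List

variable {α β γ : Type*} [DecidableEq α]

lemma lookup_zip_map_self (h : α → β) :
    ∀ (xs : List α) (z : α),
      (xs.zip (xs.map h)).lookup z = if z ∈ xs then some (h z) else none
  | [], z => by simp
  | x :: xs, z => by
    by_cases hzx : z = x
    · simp [hzx]
    · simp [lookup_cons, beq_false_of_ne hzx, lookup_zip_map_self h xs z, hzx]

lemma lookup_zip_map (f : β → γ) : ∀ (xs : List α) (ts : List β) (z : α),
    (xs.zip (ts.map f)).lookup z = ((xs.zip ts).lookup z).map f
  | [], ts, z => by simp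
  | x :: xs, [], z => by simp
  | x :: xs, t :: ts, z => by
    by_cases hzx : z = x
    · simp [hzx]
    · simp [lookup_cons, beq_false_of_ne hzx, lookup_zip_map f xs ts z]

lemma exists_lookup_zip_eq_some : ∀ {xs : List α} {ws : List β} {z : α}, z ∈ xs →
    xs.length = ws.length → ∃ w ∈ ws, (xs.zip ws).lookup z = some w
  | [], ws, z, hz, _ => by simp at hz
  | x :: xs, [], z, hz, hl => by simp at hl
  | x :: xs, w :: ws, z, hz, hl => by
    by_cases hzx : z = x
    · exact ⟨w, by simp, by simp [hzx]⟩
    · obtain ⟨w', hw', hlk⟩ :=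
        exists_lookup_zip_eq_some (ws := ws) (by simpa [hzx] using hz) (by simpa using hl)
      exact ⟨w', by simp [hw'], by simp [lookup_cons, beq_false_of_ne hzx, hlk]⟩

lemma lookup_zip_eq_none {xs : List α} (ws : List β) {z : α} (h : z ∉ xs) :
    (xs.zip ws).lookup z = none :=
  lookup_eq_none_iff.2 fun _ hp => bne_iff_ne.2 fun hz => h (hz ▸ (of_mem_zip hp).1)

lemma mem_of_lookup_zip_eq_some {xs : List α} {ws : List β} {z : α} {w : β}
    (h : (xs.zip ws).lookup z = some w) : w ∈ ws := by
  obtain ⟨l₁, l₂, heq, -⟩ := lookup_eq_some_iff.1 h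
  exact (of_mem_zip (heq ▸ by simp : (z, w) ∈ xs.zip ws)).2

end List

namespace QTerm

@[simp] lemma qsubst_con (σ : ℕ → Option QTerm) (x : ℕ) (M : Lam) (ts : List QTerm) :
    qsubst σ (.con x M ts) = .con x M (ts.map (qsubst σ)) := by
  simp [qsubst]

@[simp] lemma countApp_con (x : ℕ) (M : Lam) (ts : List QTerm) :
    countApp (.con x M ts) = (ts.map countApp).sum := by
  simp [countApp]

lemma IsConTermQ.countApp_eq_zero : ∀ {t : QTerm}, IsConTermQ t → countApp t = 0
  | _, .capp hu hv => by simp [countApp, hu.countApp_eq_zero, hv.countApp_eq_zero]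
  | .con x M ts, .con hts => by
    rw [countApp_con]
    exact List.sum_eq_zero (by simpa using fun t ht => (hts t ht).countApp_eq_zero)
decreasing_by
  all_goals simp_wf
  all_goals try have := List.sizeOf_lt_of_mem ht
  all_goals omega

end QTerm

@[simp] lemma readbackW_con (x : ℕ) (M : Lam) (ts : List QTerm) :
    readbackW (.con x M ts) =
      Lam.msubst (.lam x M) (Lam.substOf (Lam.fvList (.lam x M)) (ts.map readbackW)) := by
  simp [readbackW]

lemma readbackW_getD_var (o : Option QTerm) (z : ℕ) :
    readbackW (o.getD (.var z)) = (o.map readbackW).getD (.var z) := by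
  cases o <;> simp [readbackW]

lemma readbackW_qsubst_con (τ : ℕ → Option QTerm) (x : ℕ) (M : Lam) :
    readbackW (QTerm.qsubst τ (.con x M ((Lam.fvList (.lam x M)).map .var))) =
      Lam.msubst (.lam x M) (fun z => (τ z).map readbackW) := by
  simp only [QTerm.qsubst_con, readbackW_con, List.map_map]
  refine Lam.msubst_congr fun z hz => ?_
  rw [Lam.substOf, List.lookup_zip_map_self, if_pos (Lam.mem_fvList.2 hz)]
  simp [QTerm.qsubst, readbackW_getD_var]

lemma readbackW_qsubst_transW' : ∀ (M : Lam) (τ : ℕ → Option QTerm),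
    readbackW (QTerm.qsubst τ (transW' M)) = Lam.msubst M (fun z => (τ z).map readbackW)
  | .var y, τ => by simp [transW', QTerm.qsubst, readbackW_getD_var, Lam.msubst]
  | .lam x M, τ => readbackW_qsubst_con τ x M
  | .app M N, τ => by
    simp [transW', QTerm.qsubst, readbackW, Lam.msubst, readbackW_qsubst_transW' M τ,
      readbackW_qsubst_transW' N τ]

lemma readbackW_qsubst_transW : ∀ (M : Lam) (τ : ℕ → Option QTerm),
    readbackW (QTerm.qsubst τ (transW M)) = Lam.msubst M (fun z => (τ z).map readbackW)
  | .var y, τ => by simp [transW, QTerm.qsubst, readbackW_getD_var, Lam.msubst]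
  | .lam x M, τ => readbackW_qsubst_con τ x M
  | .app M N, τ => by
    simp [transW, QTerm.qsubst, readbackW, Lam.msubst, readbackW_qsubst_transW M τ,
      readbackW_qsubst_transW' N τ]

lemma fv_readbackW_eq_empty {t : QTerm} (hwf : QTerm.WFQ t) (hcl : QTerm.ClosedQ t) :
    Lam.fv (readbackW t) = ∅ := by
  induction hwf with
  | var => cases hcl
  | app _ _ ihu ihv => cases hcl with | app hu hv => simp [readbackW, Lam.fv, ihu hu, ihv hv]
  | capp _ _ ihu ihv => cases hcl with | capp hu hv => simp [readbackW, Lam.fv, ihu hu, ihv hv]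
  | @con x M ts hlen _ ih =>
    cases hcl with | con hcl =>
    rw [readbackW_con, Finset.eq_empty_iff_forall_notMem]
    intro w hw
    obtain ⟨z, hz, hw⟩ := Lam.exists_mem_fv_of_mem_fv_msubst hw
    obtain ⟨r, hr, hlk⟩ := List.exists_lookup_zip_eq_some (ws := ts.map readbackW)
      (Lam.mem_fvList.2 hz) (by simp [hlen])
    obtain ⟨t', ht', rfl⟩ := List.mem_map.1 hr
    simp [Lam.substOf, hlk, ih t' ht' (hcl t' ht')] at hw

lemma readbackW_beta_rhs {y : ℕ} {P : Lam} {ts : List QTerm} (v : QTerm)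
    (hts : ∀ t ∈ ts, Lam.fv (readbackW t) = ∅)
    (hlen : ts.length = (Lam.fvList (.lam y P)).length) :
    readbackW (QTerm.qsubst
        (QTerm.substOfQ (Lam.fvList (.lam y P) ++ [y]) (ts ++ [v])) (transW P)) =
      Lam.subst (Lam.msubst P (fun z => if z = y then none else
        Lam.substOf (Lam.fvList (.lam y P)) (ts.map readbackW) z)) y (readbackW v) := by
  have hclosed : ∀ z t, (if z = y then none else
      Lam.substOf (Lam.fvList (.lam y P)) (ts.map readbackW) z) = some t → Lam.fv t = ∅ := by
    intro z t h
    by_cases hzy : z = y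
    · simp [hzy] at h
    · obtain ⟨t', ht', rfl⟩ :=
        List.mem_map.1 (List.mem_of_lookup_zip_eq_some (by simpa [hzy, Lam.substOf] using h))
      exact hts t' ht'
  rw [readbackW_qsubst_transW, Lam.subst_msubst hclosed (by simp)]
  refine Lam.msubst_congr fun z hz => ?_
  have hzip : (Lam.fvList (.lam y P) ++ [y]).zip (ts ++ [v]) =
      (Lam.fvList (.lam y P)).zip ts ++ [(y, v)] := by
    rw [List.zip_append hlen.symm]; rfl
  by_cases hzy : z = y
  · subst hzy
    simp [QTerm.substOfQ, hzip, List.lookup_append,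
      List.lookup_zip_eq_none ts (Lam.notMem_fvList_lam_self z P)]
  · obtain ⟨w, -, hlk⟩ := List.exists_lookup_zip_eq_some (z := z) (ws := ts)
      (Lam.mem_fvList.2 (by simp [Lam.fv, hz, hzy])) hlen.symm
    simp [QTerm.substOfQ, hzip, List.lookup_append, hlk, hzy, Lam.substOf, List.lookup_zip_map]

section Redex

variable {v : QTerm}

lemma exists_psiStep_identity (z : ℕ) (hv : QTerm.IsConTermQ v) (hwfv : QTerm.WFQ v) :
    ∃ u, PsiStep (.app (.con z (.var z) []) v) u ∧ readbackW u = readbackW v := by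
  cases hv with
  | capp hw hf => exact ⟨_, .id_capp hw hf, by simp [readbackW]⟩
  | con hts => cases hwfv with | con hlen _ => exact ⟨_, .id_con hts hlen, rfl⟩

lemma exists_psiStep_projection {z w : ℕ} {t : QTerm} (hwz : w ≠ z) (ht : QTerm.IsConTermQ t)
    (hwft : QTerm.WFQ t) (hv : QTerm.IsConTermQ v) :
    ∃ u, PsiStep (.app (.con z (.var w) [t]) v) u ∧ readbackW u = readbackW t := by
  cases ht with
  | capp hf hg => exact ⟨_, .proj_capp hwz hf hg hv, by simp [readbackW]⟩
  | con hts => cases hwft with | con hlen _ => exact ⟨_, .proj_con hwz hts hlen hv, rfl⟩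

lemma exists_psiStep_redex {y x : ℕ} {P M : Lam} {ts : List QTerm}
    (hwf : QTerm.WFQ (.con y P ts)) (hcl : QTerm.ClosedQ (.con y P ts))
    (hts : ∀ t ∈ ts, QTerm.IsConTermQ t) (hv : QTerm.IsConTermQ v) (hwfv : QTerm.WFQ v)
    (hrb : readbackW (.con y P ts) = .lam x M) :
    ∃ u, PsiStep (.app (.con y P ts) v) u ∧ readbackW u = Lam.subst M x (readbackW v) := by
  rw [readbackW_con, Lam.msubst, Lam.lam.injEq] at hrb
  obtain ⟨rfl, rfl⟩ := hrb
  cases hwf with | con hlen hwts =>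
  cases hcl with | con hclts =>
  have hclosed t (ht : t ∈ ts) := fv_readbackW_eq_empty (hwts t ht) (hclts t ht)
  by_cases hPvar : ∃ z, P = .var z
  · obtain ⟨z, rfl⟩ := hPvar
    rcases eq_or_ne z y with rfl | hzy
    · simp only [Lam.fvList_lam_var_self, List.length_nil, List.length_eq_zero_iff] at hlen
      subst hlen
      simpa [Lam.msubst, Lam.subst] using exists_psiStep_identity z hv hwfv
    · simp only [Lam.fvList_lam_var_of_ne hzy, List.length_singleton,
        List.length_eq_one_iff] at hlen
      obtain ⟨t, rfl⟩ := hlen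
      have hsubst := Lam.subst_eq_self_of_notMem_fv (M := readbackW t) (y := y)
        (by simp [hclosed t (by simp)]) (readbackW v)
      simpa [Lam.msubst, Lam.substOf, Lam.fvList_lam_var_of_ne hzy, hzy, hsubst] using
        exists_psiStep_projection hzy (hts t (by simp)) (hwts t (by simp)) hv
  · exact ⟨_, .beta (not_exists.1 hPvar) hts hv hlen, readbackW_beta_rhs v hclosed hlen⟩

end Redex

namespace QTerm.CanonicalQ

lemma eq_app_of_readbackW_eq_app {t : QTerm} {A B : Lam} (hcan : CanonicalQ t)
    (hrb : readbackW t = .app A B) :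
    ∃ u v, t = .app u v ∧ CanonicalQ u ∧ IsConTermQ v ∧
      readbackW u = A ∧ readbackW v = B := by
  cases hcan with
  | con => simp [Lam.msubst] at hrb
  | app hu hv =>
    simp only [readbackW, Lam.app.injEq] at hrb
    exact ⟨_, _, rfl, hu, hv, hrb⟩

lemma eq_con_of_readbackW_eq_lam {u : QTerm} {x : ℕ} {M : Lam} (hcan : CanonicalQ u)
    (hrb : readbackW u = .lam x M) :
    ∃ y P ts, u = .con y P ts ∧ ∀ t ∈ ts, IsConTermQ t := by
  cases hcan with
  | con hts => exact ⟨_, _, _, rfl, hts⟩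
  | app => simp [readbackW] at hrb

end QTerm.CanonicalQ

/-- If M →h N, t is a canonical closed Ψ-term and ⟦t⟧_w = M, then t rewrites in one
step in Ψ to a term u with ⟦u⟧_w = N and #app(u) + 1 ≥ #app(t). -/
theorem cbnStep_lift (M N : Lam) (t : QTerm)
    (hwf : QTerm.WFQ t) (hcl : QTerm.ClosedQ t) (hcan : QTerm.CanonicalQ t)
    (hstep : CbnStep M N) (hrb : readbackW t = M) :
    ∃ u : QTerm, PsiStep t u ∧ readbackW u = N ∧
      QTerm.countApp t ≤ QTerm.countApp u + 1 := by
  induction hstep generalizing t with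
  | beta =>
    obtain ⟨u, v, rfl, hu, hv, hrbu, rfl⟩ := hcan.eq_app_of_readbackW_eq_app hrb
    obtain ⟨y, P, ts, rfl, hts⟩ := hu.eq_con_of_readbackW_eq_lam hrbu
    cases hwf with | app hwfu hwfv =>
    cases hcl with | app hclu _ =>
    obtain ⟨u', hstep, hrb'⟩ := exists_psiStep_redex hwfu hclu hts hv hwfv hrbu
    refine ⟨u', hstep, hrb', ?_⟩
    simp [QTerm.countApp, (QTerm.IsConTermQ.con hts).countApp_eq_zero, hv.countApp_eq_zero]
  | appL _ ih =>
    obtain ⟨u, v, rfl, hu, -, hrbu, rfl⟩ := hcan.eq_app_of_readbackW_eq_app hrb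
    cases hwf with | app hwfu _ =>
    cases hcl with | app hclu _ =>
    obtain ⟨u', hstep, hrb', hcount⟩ := ih u hwfu hclu hu hrbu
    exact ⟨.app u' v, .appL hstep, by simp [readbackW, hrb'], by simp [QTerm.countApp]; omega⟩
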